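/- arXiv:math/0408038 — 2 statements merged into one kernel-verified Lean document; each statement's English description precedes it below -/
import Mathlib

section
/- Let n, d be positive integers and let a_1 ≤ … ≤ a_n be integers with 1 ≤ a_i ≤ d for all i and a_1 + … + a_n > d. Then in the ring of formal power series over ℤ: (1 − t)^n · Σ_{i≥0} ( Σ_{S ∈ 𝒮} (−1)^{|S|} C(i(d − ΣS) − |S| + n − 1, n − 1) ) t^i = Σ_{S ∈ 𝒮} (−1)^{|S|} Σ_{j=0}^{|S|} (−1)^j C(|S|, j) (1 − t)^j Σ_{l≥0} A^{n−j, d−ΣS}_{l(d−ΣS)} t^l. In particular the left-hand side is a polynomial in t, namely the h-polynomial of the Veronese-type algebra 𝒱(a_1,…,a_n; d). -/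
open Finset

/-- Binomial coefficient `C(m, k)` for an integer top entry `m`, with the convention
that it vanishes whenever `m < k` (in particular whenever `m < 0`). -/
def ichoose (m : ℤ) (k : ℕ) : ℤ := if m < (k : ℤ) then 0 else (m.toNat).choose k

/-- the integers `A^{N,D}_i` defined by `(1 + T + ⋯ + T^{D−1})^N = Σ_i A^{N,D}_i T^i`. -/
noncomputable def A (N D i : ℕ) : ℕ :=
  ((∑ j ∈ Finset.range D, (Polynomial.X : Polynomial ℕ) ^ j) ^ N).coeff i

/-!
The `S`-summand `∑ᵢ C(iD − s + n − 1, n − 1) tⁱ` (with `D = d − ΣS > 0`, `s = |S| < n`) is the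
`D`-th contraction of `tˢ/(1 − t)ⁿ`, i.e. the series of its coefficients at `t^{iD}`. Expanding
`tˢ = ∑ⱼ (−1)ʲ C(s, j) (1 − t)ʲ` reduces it to contractions of `1/(1 − t)^m`, `m = n − j`.
Contraction is linear over series in `t^D`, and
`1/(1 − t)^m = (1 + t + ⋯ + t^{D−1})^m / (1 − t^D)^m`, so the contraction of `1/(1 − t)^m` is
`(∑ₗ A^{m,D}_{lD} tˡ) / (1 − t)^m`, with a polynomial numerator.
-/

namespace PowerSeries

variable {R : Type*} [CommRing R]

theorem mk_sum {ι : Type*} (s : Finset ι) (f : ι → ℕ → R) :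
    mk (fun n => ∑ x ∈ s, f x n) = ∑ x ∈ s, mk (f x) := by
  ext n
  simp [map_sum]

noncomputable def contract (p : ℕ) : R⟦X⟧ →ₗ[R] R⟦X⟧ where
  toFun f := mk fun n => coeff (n * p) f
  map_add' f g := by ext; simp
  map_smul' r f := by ext; simp

@[simp]
theorem coeff_contract (p n : ℕ) (f : R⟦X⟧) : coeff n (contract p f) = coeff (n * p) f :=
  coeff_mk n fun n => coeff (n * p) f

theorem contract_C_mul (p : ℕ) (r : R) (f : R⟦X⟧) :
    contract p (C r * f) = C r * contract p f := by
  rw [← smul_eq_C_mul, map_smul, smul_eq_C_mul]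

theorem contract_coe {p : ℕ} (hp : p ≠ 0) (f : Polynomial R) :
    contract p (f : R⟦X⟧) = (Polynomial.contract p f : R⟦X⟧) := by
  ext n
  simp [Polynomial.coeff_contract hp]

theorem contract_mul_expand {p : ℕ} (hp : p ≠ 0) (f g : R⟦X⟧) :
    contract p (f * expand p hp g) = contract p f * g := by
  ext n
  simp only [coeff_contract, coeff_mul]
  symm
  refine sum_bij_ne_zero (fun x _ _ => (x.1 * p, x.2 * p)) ?_ ?_ ?_ ?_
  · intro x hx _
    rw [HasAntidiagonal.mem_antidiagonal] at hx ⊢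
    rw [← add_mul, hx]
  · intro x _ _ y _ _ h
    simpa [Prod.ext_iff, Nat.mul_right_cancel_iff (Nat.pos_of_ne_zero hp)] using h
  · rintro ⟨y₁, y₂⟩ hy hy0
    rw [HasAntidiagonal.mem_antidiagonal] at hy
    obtain ⟨k, rfl⟩ : p ∣ y₂ := by
      by_contra h
      exact hy0 (by rw [coeff_expand_of_not_dvd p hp _ h, mul_zero])
    obtain ⟨l, rfl⟩ : p ∣ y₁ := (Nat.dvd_add_iff_left ⟨k, rfl⟩).mpr (hy ▸ dvd_mul_left p n)
    rw [coeff_expand_mul] at hy0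
    refine ⟨(l, k), ?_, by rwa [mul_comm l], by simp [mul_comm]⟩
    rw [HasAntidiagonal.mem_antidiagonal]
    exact Nat.eq_of_mul_eq_mul_left (Nat.pos_of_ne_zero hp) (by linarith)
  · intro x _ _
    rw [mul_comm x.2 p, coeff_expand_mul]

theorem invOneSubPow_val_eq_geom_pow_mul_expand {p : ℕ} (hp : p ≠ 0) (m : ℕ) :
    (invOneSubPow R m).val = (∑ k ∈ range p, X ^ k) ^ m * expand p hp (invOneSubPow R m).val := by
  rw [← Units.inv_mul_eq_one, ← Units.inv_eq_val_inv, invOneSubPow_inv_eq_one_sub_pow, ← mul_assoc,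
    ← mul_pow, mul_neg_geom_sum, ← expand_X p hp, ← map_one (expand p hp), ← map_sub, ← map_pow,
    ← map_mul, ← invOneSubPow_inv_eq_one_sub_pow, Units.inv_val]

theorem one_sub_X_pow_mul_contract_invOneSubPow {p : ℕ} (hp : p ≠ 0) (m : ℕ) :
    (1 - X) ^ m * contract p (invOneSubPow R m).val = contract p ((∑ k ∈ range p, X ^ k) ^ m) := by
  rw [invOneSubPow_val_eq_geom_pow_mul_expand hp, contract_mul_expand, mul_left_comm,
    ← invOneSubPow_inv_eq_one_sub_pow, Units.inv_val, mul_one]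

theorem X_pow_eq_sum_C_mul_one_sub_X_pow (s : ℕ) :
    (X : R⟦X⟧) ^ s =
      ∑ j ∈ range (s + 1), C ((-1) ^ j * (s.choose j : R)) * (1 - X) ^ j := by
  conv_lhs => rw [← sub_sub_cancel 1 X, sub_eq_neg_add, add_pow]
  refine sum_congr rfl fun j _ => ?_
  rw [neg_pow, one_pow, mul_one, map_mul, map_pow, map_neg, map_one, map_natCast]
  ring

theorem one_sub_X_pow_mul_contract_X_pow_mul_invOneSubPow {p s n : ℕ} (hp : p ≠ 0) (hs : s ≤ n) :
    (1 - X) ^ n * contract p (X ^ s * (invOneSubPow R n).val) =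
      ∑ j ∈ range (s + 1), C ((-1) ^ j * (s.choose j : R)) * (1 - X) ^ j *
        contract p ((∑ k ∈ range p, X ^ k) ^ (n - j)) := by
  rw [X_pow_eq_sum_C_mul_one_sub_X_pow, sum_mul, map_sum, mul_sum]
  refine sum_congr rfl fun j hj => ?_
  obtain ⟨e, rfl⟩ := Nat.exists_eq_add_of_le' (by rw [mem_range] at hj; omega : j ≤ n)
  rw [mul_assoc, one_sub_pow_mul_invOneSubPow_val_add_eq_invOneSubPow_val, contract_C_mul,
    Nat.add_sub_cancel, ← one_sub_X_pow_mul_contract_invOneSubPow hp, pow_add]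
  ring

end PowerSeries

open PowerSeries

theorem A_eq_coeff (N D i : ℕ) :
    (A N D i : ℤ) = ((∑ k ∈ range D, (Polynomial.X : Polynomial ℤ) ^ k) ^ N).coeff i := by
  rw [A, ← eq_natCast (Nat.castRingHom ℤ), ← Polynomial.coeff_map]
  simp [Polynomial.map_sum]

theorem mk_A_eq_coe_contract {D : ℕ} (hD : D ≠ 0) (m : ℕ) :
    PowerSeries.mk (fun l => (A m D (l * D) : ℤ)) =
      ((Polynomial.contract D ((∑ k ∈ range D, Polynomial.X ^ k) ^ m) : Polynomial ℤ) : ℤ⟦X⟧) := by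
  ext l
  simp [A_eq_coeff, Polynomial.coeff_contract hD]

theorem contract_geom_sum_pow {D : ℕ} (hD : D ≠ 0) (m : ℕ) :
    contract D ((∑ k ∈ range D, X ^ k : ℤ⟦X⟧) ^ m) =
      PowerSeries.mk (fun l => (A m D (l * D) : ℤ)) := by
  rw [mk_A_eq_coe_contract hD, ← contract_coe hD, Polynomial.coe_pow,
    ← Polynomial.coeToPowerSeries.ringHom_apply, map_sum]
  simp

theorem mk_ichoose_eq_contract {D s n : ℕ} (hn : 0 < n) :
    PowerSeries.mk (fun i => ichoose ((i : ℤ) * D - s + n - 1) (n - 1)) =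
      contract D (X ^ s * (invOneSubPow ℤ n).val) := by
  ext i
  simp only [coeff_mk, coeff_contract, coeff_X_pow_mul',
    invOneSubPow_val_eq_mk_sub_one_add_choose_of_pos ℤ n hn, ichoose]
  rw [← Nat.cast_mul]
  split_ifs with h_neg h_le h_le
  · omega
  · rfl
  · rw [show ((i * D : ℕ) - (s : ℤ) + n - 1).toNat = n - 1 + (i * D - s) by omega]
  · omega

theorem Finset.card_lt_univ_of_sum_lt_sum {ι M : Type*} [Fintype ι] [AddCommMonoid M]
    [Preorder M] {a : ι → M} {S : Finset ι} (h : ∑ i ∈ S, a i < ∑ i, a i) : S.card < Fintype.card ι := by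
  have hS : S ≠ univ := by
    rintro rfl
    exact h.false
  simpa using card_lt_card (ssubset_univ_iff.mpr hS)

theorem one_sub_X_pow_mul_mk_ichoose {D s n : ℕ} (hD : D ≠ 0) (hs : s < n) :
    (1 - X : ℤ⟦X⟧) ^ n * PowerSeries.mk (fun i => ichoose ((i : ℤ) * D - s + n - 1) (n - 1)) =
      ∑ j ∈ range (s + 1), C ((-1) ^ j * (s.choose j : ℤ)) * (1 - X) ^ j *
        PowerSeries.mk (fun l => (A (n - j) D (l * D) : ℤ)) := by
  simp_rw [mk_ichoose_eq_contract (Nat.zero_lt_of_lt hs),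
    one_sub_X_pow_mul_contract_X_pow_mul_invOneSubPow hD hs.le, contract_geom_sum_pow hD]

theorem one_sub_X_pow_mul_mk_neg_one_pow_mul_ichoose {d σ s n : ℕ} (hσ : σ < d) (hs : s < n) :
    (1 - X : ℤ⟦X⟧) ^ n *
        PowerSeries.mk (fun i => (-1) ^ s * ichoose ((i : ℤ) * ((d : ℤ) - σ) - s + n - 1) (n - 1)) =
      ∑ j ∈ range (s + 1), C ((-1) ^ s * (-1) ^ j * (s.choose j : ℤ)) * (1 - X) ^ j *
        PowerSeries.mk (fun l => (A (n - j) (d - σ) (l * (d - σ)) : ℤ)) := by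
  have h_sign :
      PowerSeries.mk (fun i => (-1) ^ s * ichoose ((i : ℤ) * ((d : ℤ) - σ) - s + n - 1) (n - 1)) =
        C ((-1) ^ s) *
          PowerSeries.mk (fun i => ichoose ((i : ℤ) * (d - σ : ℕ) - s + n - 1) (n - 1)) := by
    ext i
    rw [coeff_mk, coeff_C_mul, coeff_mk, Nat.cast_sub hσ.le]
  rw [h_sign, mul_left_comm, one_sub_X_pow_mul_mk_ichoose (by omega) hs, mul_sum]
  refine sum_congr rfl fun j _ => ?_
  simp only [map_mul]
  ring

theorem h_polynomial_veronese_type_general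
    (n d : ℕ) (a : Fin n → ℕ)
    (hsum : d < ∑ j, a j) :
    ((1 - PowerSeries.X : PowerSeries ℤ) ^ n *
        PowerSeries.mk (fun i =>
          ∑ S ∈ Finset.univ.powerset.filter (fun S : Finset (Fin n) => ∑ j ∈ S, a j < d),
            (-1 : ℤ) ^ S.card *
              ichoose ((i : ℤ) * ((d : ℤ) - ∑ j ∈ S, (a j : ℤ)) - S.card + n - 1) (n - 1)) =
      ∑ S ∈ Finset.univ.powerset.filter (fun S : Finset (Fin n) => ∑ j ∈ S, a j < d),
        ∑ j ∈ Finset.range (S.card + 1),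
          PowerSeries.C (R := ℤ) ((-1) ^ S.card * (-1) ^ j * (S.card.choose j)) *
            (1 - PowerSeries.X) ^ j *
            PowerSeries.mk (fun l =>
              (A (n - j) (d - ∑ k ∈ S, a k) (l * (d - ∑ k ∈ S, a k)) : ℤ))) ∧
    ∃ p : Polynomial ℤ,
      (1 - PowerSeries.X : PowerSeries ℤ) ^ n *
        PowerSeries.mk (fun i =>
          ∑ S ∈ Finset.univ.powerset.filter (fun S : Finset (Fin n) => ∑ j ∈ S, a j < d),
            (-1 : ℤ) ^ S.card *
              ichoose ((i : ℤ) * ((d : ℤ) - ∑ j ∈ S, (a j : ℤ)) - S.card + n - 1) (n - 1)) =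
        (p : PowerSeries ℤ) := by
  refine (and_iff_left_of_imp fun h_expansion => ?_).mpr ?_
  · rw [h_expansion]
    suffices h : _ ∈ (Polynomial.coeToPowerSeries.ringHom : Polynomial ℤ →+* ℤ⟦X⟧).range from
      (RingHom.mem_range.mp h).imp fun _ => Eq.symm
    refine sum_mem fun S hS => sum_mem fun j _ => mul_mem (mul_mem ?_ (pow_mem ?_ _)) ?_
    · exact RingHom.mem_range.mpr ⟨Polynomial.C _, Polynomial.coe_C _⟩
    · exact RingHom.mem_range.mpr ⟨1 - Polynomial.X, by simp⟩
    · have hD : d - ∑ k ∈ S, a k ≠ 0 := Nat.sub_ne_zero_of_lt (mem_filter.mp hS).2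
      exact RingHom.mem_range.mpr ⟨_, (mk_A_eq_coe_contract hD _).symm⟩
  · rw [mk_sum, mul_sum]
    refine sum_congr rfl fun S hS => ?_
    have hS_lt : ∑ j ∈ S, a j < d := (mem_filter.mp hS).2
    simp only [← Nat.cast_sum]
    exact one_sub_X_pow_mul_mk_neg_one_pow_mul_ichoose hS_lt
      ((card_lt_univ_of_sum_lt_sum (hS_lt.trans hsum)).trans_eq (Fintype.card_fin n))

/-- The h-polynomial of the Veronese-type algebra `𝒱(a₁,…,aₙ; d)`: in `ℤ⟦t⟧`,
`(1 − t)^n` times the Hilbert series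
`Σ_i (Σ_{S∈𝒮} (−1)^{|S|} C(i(d−ΣS)−|S|+n−1, n−1)) t^i` equals
`Σ_{S∈𝒮} (−1)^{|S|} Σ_{j=0}^{|S|} (−1)^j C(|S|,j) (1−t)^j Σ_{l≥0} A^{n−j,d−ΣS}_{l(d−ΣS)} t^l`;
in particular the left-hand side is a polynomial in `t`. -/
theorem h_polynomial_veronese_type
    (n d : ℕ) (hn : 0 < n) (hd : 0 < d) (a : Fin n → ℕ)
    (hmono : Monotone a) (h1 : ∀ j, 1 ≤ a j) (hle : ∀ j, a j ≤ d)
    (hsum : d < ∑ j, a j) :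
    ((1 - PowerSeries.X : PowerSeries ℤ) ^ n *
        PowerSeries.mk (fun i =>
          ∑ S ∈ Finset.univ.powerset.filter (fun S : Finset (Fin n) => ∑ j ∈ S, a j < d),
            (-1 : ℤ) ^ S.card *
              ichoose ((i : ℤ) * ((d : ℤ) - ∑ j ∈ S, (a j : ℤ)) - S.card + n - 1) (n - 1)) =
      ∑ S ∈ Finset.univ.powerset.filter (fun S : Finset (Fin n) => ∑ j ∈ S, a j < d),
        ∑ j ∈ Finset.range (S.card + 1),
          PowerSeries.C (R := ℤ) ((-1) ^ S.card * (-1) ^ j * (S.card.choose j)) *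
            (1 - PowerSeries.X) ^ j *
            PowerSeries.mk (fun l =>
              (A (n - j) (d - ∑ k ∈ S, a k) (l * (d - ∑ k ∈ S, a k)) : ℤ))) ∧
    ∃ p : Polynomial ℤ,
      (1 - PowerSeries.X : PowerSeries ℤ) ^ n *
        PowerSeries.mk (fun i =>
          ∑ S ∈ Finset.univ.powerset.filter (fun S : Finset (Fin n) => ∑ j ∈ S, a j < d),
            (-1 : ℤ) ^ S.card *
              ichoose ((i : ℤ) * ((d : ℤ) - ∑ j ∈ S, (a j : ℤ)) - S.card + n - 1) (n - 1)) =
        (p : PowerSeries ℤ) :=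
  h_polynomial_veronese_type_general n d a hsum
end

section
/- Let n > d ≥ 1 be integers and, for i ≥ 0, let H(i) be the number of tuples (α_1,…,α_n) of non-negative integers with α_1 + … + α_n = i·d and α_j ≤ i for all j. Then in the ring of formal power series over ℤ: (1 − t)^n · Σ_{i≥0} H(i) t^i = Σ_{s=0}^{d−1} (−1)^s C(n, s) Σ_{j=0}^{s} (−1)^j C(s, j) (1 − t)^j Σ_{l≥0} A^{n−j, d−s}_{l(d−s)} t^l. -/
open Finset

/-!
Write `P_e = 1 + X + ⋯ + X^{e-1}` and let `downsample e` send `Σ a_m X^m` to `Σ a_{le} X^l`,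
so that `Σ_l A^{N,e}_{le} X^l = downsample e (P_e^N)`. Since `P_e^N = (1 - X^e)^N (1 - X)^{-N}`
and `downsample e` turns multiplication by `1 - X^e` into multiplication by `1 - X`, both sides
equal `Σ_{s<d} (-1)^s C(n,s) downsample (d-s) (X^s P_{d-s}^n)`: the left side by
inclusion–exclusion on `H(i) = [X^{id}] P_{i+1}^n`, in which the terms with `s ≥ d` vanish, and
the right side because `Σ_j (-1)^j C(s,j) (1-X)^j = X^s`.
-/

open PowerSeries

namespace PowerSeries

section CommSemiring

variable {R : Type*} [CommSemiring R]

noncomputable def downsample (e : ℕ) : R⟦X⟧ →ₗ[R] R⟦X⟧ where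
  toFun f := mk fun l => coeff (l * e) f
  map_add' f g := by ext; simp
  map_smul' a f := by ext; simp

@[simp]
lemma coeff_downsample (e l : ℕ) (f : R⟦X⟧) : coeff l (downsample e f) = coeff (l * e) f := by
  simp [downsample]

lemma downsample_C_mul (e : ℕ) (a : R) (f : R⟦X⟧) :
    downsample e (C a * f) = C a * downsample e f := by
  rw [← smul_eq_C_mul, map_smul, smul_eq_C_mul]

lemma downsample_X_pow_mul {e : ℕ} (he : 0 < e) (f : R⟦X⟧) :
    downsample e (X ^ e * f) = X * downsample e f := by
  ext (_ | l)
  · simp [coeff_X_pow_mul', he.ne']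
  · simp [coeff_X_pow_mul', add_mul]

lemma coeff_geom_sum_pow (N e m : ℕ) :
    coeff m ((∑ j ∈ range e, X ^ j : R⟦X⟧) ^ N) =
      #{f ∈ Fintype.piFinset fun _ : Fin N => range e | ∑ k, f k = m} := by
  rw [← Fin.prod_const, prod_univ_sum, map_sum, card_filter, Nat.cast_sum]
  refine sum_congr rfl fun f _ => ?_
  simp [prod_pow_eq_pow_sum, coeff_X_pow, eq_comm]

end CommSemiring

section CommRing

variable {R : Type*} [CommRing R]

lemma downsample_one_sub_X_pow_pow_mul {e : ℕ} (he : 0 < e) (N : ℕ) (f : R⟦X⟧) :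
    downsample e ((1 - X ^ e) ^ N * f) = (1 - X) ^ N * downsample e f := by
  induction N with
  | zero => simp
  | succ N ih =>
    rw [pow_succ', mul_assoc, sub_mul, one_mul, map_sub, downsample_X_pow_mul he, ih]
    ring

lemma geom_sum_pow_eq (N e : ℕ) :
    (∑ j ∈ range e, X ^ j : R⟦X⟧) ^ N = (1 - X ^ e) ^ N * (invOneSubPow R N).val := by
  rw [← mul_neg_geom_sum, mul_pow, ← invOneSubPow_inv_eq_one_sub_pow, mul_right_comm,
    Units.inv_val, one_mul]

lemma one_sub_pow_eq_sum (y : R⟦X⟧) (n : ℕ) :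
    (1 - y) ^ n = ∑ k ∈ range (n + 1), C ((-1 : R) ^ k * n.choose k) * y ^ k := by
  rw [sub_eq_neg_add, add_pow]
  refine sum_congr rfl fun k _ => ?_
  rw [neg_pow, one_pow, map_mul, map_pow, map_neg, map_one, map_natCast]
  ring

lemma coeff_one_sub_X_pow_pow_mul (f : R⟦X⟧) {n d : ℕ} (hd : 0 < d) (hdn : d ≤ n + 1)
    (i : ℕ) :
    coeff (i * d) ((1 - X ^ (i + 1)) ^ n * f) =
      ∑ k ∈ range d, (-1 : R) ^ k * n.choose k * coeff (i * (d - k)) (X ^ k * f) := by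
  have hterm (k : ℕ) : coeff (i * d) (X ^ ((i + 1) * k) * f) =
      if k < d then coeff (i * (d - k)) (X ^ k * f) else 0 := by
    split_ifs with hk
    · rw [show i * d = i * (d - k) + i * k by rw [← mul_add, Nat.sub_add_cancel hk.le],
        add_mul, one_mul, pow_add, mul_assoc, coeff_X_pow_mul]
    · rw [coeff_X_pow_mul', if_neg]
      nlinarith
  rw [one_sub_pow_eq_sum, sum_mul, map_sum,
    ← sum_subset (range_subset_range.2 hdn) fun k _ hk => ?_] <;>
    simp only [mul_assoc, coeff_C_mul, ← pow_mul, hterm]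
  · refine sum_congr rfl fun k hk => ?_
    rw [if_pos (mem_range.1 hk)]
  · rw [if_neg (by simpa using hk), mul_zero, mul_zero]

lemma mk_card_eq_sum_downsample {n d : ℕ} (hd : 0 < d) (hdn : d ≤ n + 1) :
    mk (fun i => (#{α ∈ Fintype.piFinset fun _ : Fin n => range (i + 1) |
        ∑ j, α j = i * d} : R)) =
      ∑ s ∈ range d, C ((-1 : R) ^ s * n.choose s) *
        downsample (d - s) (X ^ s * (invOneSubPow R n).val) := by
  ext i
  rw [coeff_mk, ← coeff_geom_sum_pow, geom_sum_pow_eq, coeff_one_sub_X_pow_pow_mul _ hd hdn,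
    map_sum]
  simp only [coeff_C_mul, coeff_downsample, mul_comm i]

lemma sum_choose_mul_one_sub_X_pow_mul_downsample {e s n : ℕ} (he : 0 < e) (hsn : s ≤ n) :
    ∑ j ∈ range (s + 1), C ((-1 : R) ^ j * s.choose j) * (1 - X) ^ j *
        downsample e ((∑ i ∈ range e, X ^ i) ^ (n - j)) =
      downsample e (X ^ s * (∑ i ∈ range e, X ^ i) ^ n) := by
  rw [show (X : R⟦X⟧) ^ s = (1 - (1 - X)) ^ s by rw [sub_sub_cancel], one_sub_pow_eq_sum,
    sum_mul, map_sum]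
  refine sum_congr rfl fun j hj => ?_
  have hjn : j ≤ n := (Nat.lt_succ_iff.1 (mem_range.1 hj)).trans hsn
  rw [mul_assoc, mul_assoc, downsample_C_mul, ← downsample_one_sub_X_pow_pow_mul he,
    ← mul_neg_geom_sum, mul_pow, mul_assoc, ← pow_add, Nat.add_sub_cancel' hjn]

end CommRing

end PowerSeries

lemma cast_A_eq_coeff {R : Type*} [CommSemiring R] (N e m : ℕ) :
    (A N e m : R) = coeff m ((∑ j ∈ range e, X ^ j : R⟦X⟧) ^ N) := by
  rw [A, ← eq_natCast (Nat.castRingHom R), ← Polynomial.coeff_map, ← Polynomial.coeff_coe,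
    ← Polynomial.coeToPowerSeries.ringHom_apply]
  simp only [Polynomial.map_pow, Polynomial.map_sum, Polynomial.map_X, map_pow, map_sum,
    Polynomial.coeToPowerSeries.ringHom_apply, Polynomial.coe_X]

/-- The Hilbert series of `𝒱(1,…,1; d)` (the monomial algebra of the `d`-th
hypersimplex): with `H(i)` the number of tuples `(α₁,…,αₙ)` of non-negative integers
with `Σ αⱼ = i·d` and `αⱼ ≤ i`, in `ℤ⟦t⟧` one has
`(1−t)^n Σ_i H(i) t^i = Σ_{s=0}^{d−1} (−1)^s C(n,s) Σ_{j=0}^s (−1)^j C(s,j) (1−t)^j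
Σ_{l≥0} A^{n−j,d−s}_{l(d−s)} t^l`. -/
theorem hilbert_series_hypersimplex
    (n d : ℕ) (hd : 1 ≤ d) (hdn : d < n) :
    (1 - PowerSeries.X : PowerSeries ℤ) ^ n *
        PowerSeries.mk (fun i =>
          ((Finset.filter (fun α : Fin n → ℕ => ∑ j, α j = i * d)
              (Fintype.piFinset fun _ => Finset.range (i + 1))).card : ℤ)) =
      ∑ s ∈ Finset.range d, ∑ j ∈ Finset.range (s + 1),
        (PowerSeries.C : ℤ →+* PowerSeries ℤ) ((-1) ^ s * (n.choose s) * (-1) ^ j * (s.choose j)) *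
          (1 - PowerSeries.X) ^ j *
          PowerSeries.mk (fun l => (A (n - j) (d - s) (l * (d - s)) : ℤ)) := by
  have hA (s j : ℕ) : mk (fun l => (A (n - j) (d - s) (l * (d - s)) : ℤ)) =
      downsample (d - s) ((∑ i ∈ range (d - s), X ^ i) ^ (n - j)) := by
    ext l
    rw [coeff_mk, coeff_downsample, cast_A_eq_coeff]
  rw [mk_card_eq_sum_downsample hd (by omega), mul_sum]
  refine sum_congr rfl fun s hs => ?_
  have hsd : s < d := mem_range.1 hs
  calc (1 - X) ^ n * (C ((-1) ^ s * (n.choose s : ℤ)) *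
        downsample (d - s) (X ^ s * (invOneSubPow ℤ n).val))
      = C ((-1) ^ s * (n.choose s : ℤ)) *
          downsample (d - s) (X ^ s * (∑ i ∈ range (d - s), X ^ i) ^ n) := by
        rw [mul_left_comm, ← downsample_one_sub_X_pow_pow_mul (by omega), mul_left_comm,
          ← geom_sum_pow_eq]
    _ = _ := by
        rw [← sum_choose_mul_one_sub_X_pow_mul_downsample (by omega) (by omega), mul_sum]
        refine sum_congr rfl fun j _ => ?_
        simp only [hA, map_mul]
        ring
end
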